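/- Let D² ∼ Exp(λπ) be independent of N ∼ Poisson(θ), K > 0, β > 2, and define Ŝ = log(1 + K·D^{−β})/(N + 1). Then lim inf_{s→∞} (1/s)·log P(Ŝ > s) ≥ −2/β; combined with P(Ŝ > s) ≤ P(log(1+K·D^{−β}) > s), one concludes lim_{s→∞} −(1/s)·log P(Ŝ > s) = 2/β. -/

import Mathlib

/-!
Since `Ŝ ≤ log(1 + K D^{-β})` and `Ŝ = log(1 + K D^{-β})` on `{N = 0}`, the tail `P(Ŝ > s)` is
squeezed between `e^{-θ} P(D² < T(s))` and `P(D² < T(s))`, where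
`T(s) = (K / (e^s - 1))^{2/β}` is the value with `log(1 + K D^{-β}) > s ↔ D² < T(s)`.
As `T(s) → 0`, the exponential law gives `P(D² < T) ≍ λπ T ≍ e^{-2s/β}`, so
`log P(Ŝ > s) = -2s/β + O(1)`.
-/

open MeasureTheory ProbabilityTheory Real Set Filter Topology

noncomputable def sqThreshold (K β s : ℝ) : ℝ := (K / (exp s - 1)) ^ (2 / β)

lemma lt_log_one_add_mul_rpow_neg_iff {K β s d : ℝ} (hK : 0 < K) (hβ : 0 < β) (hs : 0 < s)
    (hd : 0 < d) : s < log (1 + K * d ^ (-β)) ↔ d ^ 2 < sqThreshold K β s := by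
  have hes : 0 < exp s - 1 := by linarith [add_one_lt_exp hs.ne']
  have hd2 : d ^ (-β) = (d ^ 2) ^ (-β / 2) := by
    rw [← rpow_natCast, ← rpow_mul hd.le]; congr 1; push_cast; ring
  have hT : sqThreshold K β s = ((exp s - 1) / K) ^ (-β / 2)⁻¹ := by
    rw [sqThreshold, inv_div, div_neg, rpow_neg (by positivity), ← inv_rpow (by positivity),
      inv_div]
  rw [lt_log_iff_exp_lt (by positivity), hT,
    lt_rpow_inv_iff_of_neg (by positivity) (by positivity) (by linarith), hd2,
    div_lt_iff₀' hK]
  constructor <;> intro h <;> linarith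

lemma sqThreshold_bounds {K β s : ℝ} (hK : 0 < K) (hβ : 0 < β) (hs : log 2 ≤ s) :
    K ^ (2 / β) * exp (-(2 / β * s)) ≤ sqThreshold K β s ∧
      sqThreshold K β s ≤ (2 * K) ^ (2 / β) * exp (-(2 / β * s)) := by
  have h2 : 2 ≤ exp s := by rwa [← exp_log two_pos, exp_le_exp]
  have hes : 0 < exp s - 1 := by linarith
  have hexp : exp (-(2 / β * s)) = (exp s)⁻¹ ^ (2 / β) := by
    rw [← exp_neg, ← exp_mul]; ring_nf
  rw [sqThreshold, hexp, ← mul_rpow hK.le (by positivity),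
    ← mul_rpow (by positivity) (by positivity), ← div_eq_mul_inv, ← div_eq_mul_inv]
  constructor <;> apply rpow_le_rpow (by positivity) _ (by positivity)
  · gcongr; linarith
  · rw [div_le_div_iff₀ hes (exp_pos s)]; nlinarith

lemma mul_exp_neg_le_one_sub_exp_neg (y : ℝ) : y * exp (-y) ≤ 1 - exp (-y) := by
  have h : exp y * exp (-y) = 1 := by rw [← exp_add, add_neg_cancel, exp_zero]
  nlinarith [add_one_le_exp y, exp_pos (-y)]

lemma tendsto_inv_mul_log_of_exp_bounds {p : ℝ → ℝ} {a C₁ C₂ : ℝ} (hC₁ : 0 < C₁)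
    (hlow : ∀ᶠ s in atTop, C₁ * exp (-(a * s)) ≤ p s)
    (hup : ∀ᶠ s in atTop, p s ≤ C₂ * exp (-(a * s))) :
    Tendsto (fun s => 1 / s * log (p s)) atTop (𝓝 (-a)) := by
  have hlim : ∀ C : ℝ, 0 < C →
      Tendsto (fun s : ℝ => 1 / s * log (C * exp (-(a * s)))) atTop (𝓝 (-a)) := by
    intro C hC
    have h := (tendsto_inv_atTop_zero.mul_const (log C)).sub_const a
    rw [zero_mul, zero_sub] at h
    refine h.congr' ?_
    filter_upwards [eventually_gt_atTop 0] with s hs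
    rw [log_mul hC.ne' (exp_pos _).ne', log_exp]
    field_simp
    ring
  have hC₂ : 0 < C₂ := by
    obtain ⟨s, hl, hu⟩ := (hlow.and hup).exists
    have := (mul_pos hC₁ (exp_pos (-(a * s)))).trans_le (hl.trans hu)
    exact pos_of_mul_pos_left this (exp_pos _).le
  have hpos : ∀ᶠ s in atTop, 0 < p s :=
    hlow.mono fun s hs => (by positivity : 0 < C₁ * exp (-(a * s))).trans_le hs
  refine tendsto_of_tendsto_of_tendsto_of_le_of_le' (hlim C₁ hC₁) (hlim C₂ hC₂) ?_ ?_
  · filter_upwards [hlow, eventually_gt_atTop 0] with s hl hs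
    gcongr
  · filter_upwards [hup, hpos, eventually_gt_atTop 0] with s hu hp hs
    gcongr

lemma tendsto_inv_mul_log_of_sqThreshold_bounds {p : ℝ → ℝ} {K β c θ : ℝ} (hK : 0 < K)
    (hβ : 0 < β) (hc : 0 < c)
    (hp : ∀ s, 0 < s → exp (-θ) * (1 - exp (-(c * (sqThreshold K β s / 2)))) ≤ p s ∧
      p s ≤ 1 - exp (-(c * sqThreshold K β s))) :
    Tendsto (fun s => 1 / s * log (p s)) atTop (𝓝 (-(2 / β))) := by
  set M := (2 * K) ^ (2 / β)
  have hbounds : ∀ᶠ s in atTop, 0 < s ∧ K ^ (2 / β) * exp (-(2 / β * s)) ≤ sqThreshold K β s ∧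
      sqThreshold K β s ≤ M * exp (-(2 / β * s)) ∧ sqThreshold K β s ≤ M := by
    filter_upwards [eventually_ge_atTop (log 2)] with s hs
    have hs0 : 0 < s := (log_pos one_lt_two).trans_le hs
    obtain ⟨hTlow, hTup⟩ := sqThreshold_bounds hK hβ hs
    refine ⟨hs0, hTlow, hTup, hTup.trans (mul_le_of_le_one_right (by positivity) ?_)⟩
    exact exp_le_one_iff.2 (neg_nonpos.2 (by positivity))
  refine tendsto_inv_mul_log_of_exp_bounds
    (C₁ := exp (-θ) * (c * (K ^ (2 / β) / 2)) * exp (-(c * (M / 2)))) (C₂ := c * M)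
    (by positivity) ?_ ?_
  · filter_upwards [hbounds] with s ⟨hs, hTlow, _, hTM⟩
    set T := sqThreshold K β s
    have hT : 0 ≤ T := le_trans (by positivity) hTlow
    calc exp (-θ) * (c * (K ^ (2 / β) / 2)) * exp (-(c * (M / 2))) * exp (-(2 / β * s))
        = exp (-θ) * (c * (K ^ (2 / β) * exp (-(2 / β * s)) / 2) * exp (-(c * (M / 2)))) := by
          ring
      _ ≤ exp (-θ) * (c * (T / 2) * exp (-(c * (T / 2)))) := by gcongr
      _ ≤ exp (-θ) * (1 - exp (-(c * (T / 2)))) := by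
          gcongr
          exact mul_exp_neg_le_one_sub_exp_neg _
      _ ≤ p s := (hp s hs).1
  · filter_upwards [hbounds] with s ⟨hs, _, hTup, _⟩
    calc p s ≤ 1 - exp (-(c * sqThreshold K β s)) := (hp s hs).2
      _ ≤ c * sqThreshold K β s := by linarith [one_sub_le_exp_neg (c * sqThreshold K β s)]
      _ ≤ c * M * exp (-(2 / β * s)) := by rw [mul_assoc]; gcongr

section Probability

variable {Ω : Type*} [MeasurableSpace Ω] {μ : Measure Ω} [IsProbabilityMeasure μ]

lemma measureReal_lt_bounds_of_tail_eq_exp {X : Ω → ℝ} (hX : Measurable X) {c : ℝ}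
    (htail : ∀ t : ℝ, 0 ≤ t → μ {ω | t < X ω} = ENNReal.ofReal (exp (-(c * t))))
    {t : ℝ} (ht : 0 < t) :
    1 - exp (-(c * (t / 2))) ≤ μ.real {ω | X ω < t} ∧
      μ.real {ω | X ω < t} ≤ 1 - exp (-(c * t)) := by
  have hcompl : ∀ u : ℝ, 0 ≤ u → μ.real {ω | u < X ω}ᶜ = 1 - exp (-(c * u)) := fun u hu => by
    rw [probReal_compl_eq_one_sub (measurableSet_lt measurable_const hX), measureReal_def,
      htail u hu, ENNReal.toReal_ofReal (exp_pos _).le]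
  constructor
  · rw [← hcompl (t / 2) (by positivity)]
    exact measureReal_mono fun ω (hω : ¬ t / 2 < X ω) => show X ω < t by linarith
  · rw [← hcompl t ht.le]
    exact measureReal_mono fun ω (hω : X ω < t) => show ¬ t < X ω by linarith

lemma measureReal_lt_log_div_succ_bounds {D : Ω → ℝ} (hmD : Measurable D)
    (hDpos : ∀ ω, 0 < D ω) {c : ℝ}
    (hD2 : ∀ t : ℝ, 0 ≤ t → μ {ω | t < D ω ^ 2} = ENNReal.ofReal (exp (-(c * t))))
    {N : Ω → ℕ} {θ : ℝ} (hN0 : μ {ω | N ω = 0} = ENNReal.ofReal (exp (-θ)))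
    (hInd : IndepFun D N μ) {K β : ℝ} (hK : 0 < K) (hβ : 0 < β) {S : Ω → ℝ}
    (hS : ∀ ω, S ω = log (1 + K * D ω ^ (-β)) / ((N ω : ℝ) + 1)) {s : ℝ} (hs : 0 < s) :
    exp (-θ) * (1 - exp (-(c * (sqThreshold K β s / 2)))) ≤ μ.real {ω | s < S ω} ∧
      μ.real {ω | s < S ω} ≤ 1 - exp (-(c * sqThreshold K β s)) := by
  set T := sqThreshold K β s
  have hT : 0 < T := rpow_pos_of_pos (div_pos hK (by linarith [add_one_lt_exp hs.ne'])) _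
  obtain ⟨hlow, hup⟩ := measureReal_lt_bounds_of_tail_eq_exp (hmD.pow_const 2) hD2 hT
  have hevent : ∀ ω, s < log (1 + K * D ω ^ (-β)) ↔ D ω ^ 2 < T := fun ω =>
    lt_log_one_add_mul_rpow_neg_iff hK hβ hs (hDpos ω)
  constructor
  · have hindep : μ.real ({ω | D ω ^ 2 < T} ∩ {ω | N ω = 0}) =
        μ.real {ω | D ω ^ 2 < T} * exp (-θ) := by
      have h := hInd.measure_inter_preimage_eq_mul {x : ℝ | x ^ 2 < T} {0}
        (measurableSet_lt (by fun_prop) measurable_const) (measurableSet_singleton 0)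
      change (μ (D ⁻¹' {x | x ^ 2 < T} ∩ N ⁻¹' {0})).toReal = _
      rw [h, ENNReal.toReal_mul, show N ⁻¹' {0} = {ω | N ω = 0} from rfl, hN0,
        ENNReal.toReal_ofReal (exp_pos _).le]
      rfl
    calc exp (-θ) * (1 - exp (-(c * (T / 2)))) ≤ exp (-θ) * μ.real {ω | D ω ^ 2 < T} := by
          gcongr
      _ = μ.real ({ω | D ω ^ 2 < T} ∩ {ω | N ω = 0}) := by rw [hindep, mul_comm]
      _ ≤ μ.real {ω | s < S ω} := measureReal_mono fun ω ⟨hD, (hN : N ω = 0)⟩ => by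
          simpa [hS, hN] using (hevent ω).2 hD
  · refine le_trans (measureReal_mono fun ω (hω : s < S ω) => ?_) hup
    refine (hevent ω).1 (hω.trans_le ?_)
    rw [hS]
    exact div_le_self (log_nonneg (le_add_of_nonneg_right
      (mul_nonneg hK.le (rpow_nonneg (hDpos ω).le _)))) (by simp)

end Probability

theorem stmt_15_general {Ω : Type*} [MeasureSpace Ω] [IsProbabilityMeasure (ℙ : Measure Ω)]
    (lam θ K β : ℝ) (hlam : 0 < lam) (hK : 0 < K) (hβ : 2 < β)
    (D : Ω → ℝ) (hmD : Measurable D) (hDpos : ∀ ω, 0 < D ω)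
    (hD2 : ∀ t : ℝ, 0 ≤ t →
      ℙ {ω | t < (D ω) ^ 2} = ENNReal.ofReal (Real.exp (-(lam * Real.pi * t))))
    (N : Ω → ℕ)
    (hN : ∀ k : ℕ, ℙ {ω | N ω = k} =
      ENNReal.ofReal (Real.exp (-θ) * θ ^ k / (Nat.factorial k)))
    (hInd : IndepFun D N ℙ)
    (S : Ω → ℝ)
    (hS : ∀ ω, S ω = Real.log (1 + K * D ω ^ (-β)) / ((N ω : ℝ) + 1)) :
    (-(2 / β) ≤
      Filter.liminf (fun s : ℝ => (1 / s) * Real.log ((ℙ {ω | s < S ω}).toReal)) atTop) ∧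
    Tendsto (fun s : ℝ => -(1 / s) * Real.log ((ℙ {ω | s < S ω}).toReal))
      atTop (nhds (2 / β)) := by
  have hβ0 : 0 < β := by linarith
  have hp := tendsto_inv_mul_log_of_sqThreshold_bounds hK hβ0 (mul_pos hlam pi_pos) fun s hs =>
    measureReal_lt_log_div_succ_bounds hmD hDpos hD2 (θ := θ) (by simpa using hN 0) hInd hK hβ0
      hS hs
  refine ⟨hp.liminf_eq.ge, ?_⟩
  simpa [neg_mul, measureReal_def] using hp.neg

/-- For `Ŝ = log(1 + K·D^{−β})/(N + 1)` with `D² ∼ Exp(λπ)` independent of `N ∼ Poisson(θ)`,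
`K > 0`, `β > 2`: `liminf_{s→∞} (1/s)·log P(Ŝ > s) ≥ −2/β`, and
`lim_{s→∞} −(1/s)·log P(Ŝ > s) = 2/β`. -/
theorem stmt_15 {Ω : Type*} [MeasureSpace Ω] [IsProbabilityMeasure (ℙ : Measure Ω)]
    (lam θ K β : ℝ) (hlam : 0 < lam) (hθ : 0 < θ) (hK : 0 < K) (hβ : 2 < β)
    (D : Ω → ℝ) (hmD : Measurable D) (hDpos : ∀ ω, 0 < D ω)
    (hD2 : ∀ t : ℝ, 0 ≤ t →
      ℙ {ω | t < (D ω) ^ 2} = ENNReal.ofReal (Real.exp (-(lam * Real.pi * t))))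
    (N : Ω → ℕ) (hmN : Measurable N)
    (hN : ∀ k : ℕ, ℙ {ω | N ω = k} =
      ENNReal.ofReal (Real.exp (-θ) * θ ^ k / (Nat.factorial k)))
    (hInd : IndepFun D N ℙ)
    (S : Ω → ℝ)
    (hS : ∀ ω, S ω = Real.log (1 + K * D ω ^ (-β)) / ((N ω : ℝ) + 1)) :
    (-(2 / β) ≤
      Filter.liminf (fun s : ℝ => (1 / s) * Real.log ((ℙ {ω | s < S ω}).toReal)) atTop) ∧
    Tendsto (fun s : ℝ => -(1 / s) * Real.log ((ℙ {ω | s < S ω}).toReal))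
      atTop (nhds (2 / β)) :=
  stmt_15_general lam θ K β hlam hK hβ D hmD hDpos hD2 N hN hInd S hS
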